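/- Fix N ≥ 2 and let F = ℚ(q,t)(x₁,…,x_N) be the field of rational functions in x₁,…,x_N over ℚ(q,t). Define the following ℚ(q,t)-linear operators on F, acting on the right and composing left-to-right (f·(AB) = (f·A)·B): f·T_i = t·f + ((t x_{i+1} − x_i)/(x_{i+1} − x_i))·(f∘s_i − f) for 1 ≤ i < N, where s_i exchanges x_i and x_{i+1}; each T_i is invertible with T_i^{−1} = t^{−1}(T_i + 1 − t); f·τ = f(x_N/q, x₁, …, x_{N−1}); the Cherednik operators ξ_i = t^{1−i} T_{i−1}⋯T_1 τ T_{N−1}^{−1}⋯T_i^{−1} (with empty products interpreted as the identity, so ξ_N = t^{1−N} T_{N−1}⋯T_1 τ); the (q,t)-Dunkl operators f·D_N = (f − f·ξ_N)·x_N^{−1} and D_i = t T_i^{−1} D_{i+1} T_i^{−1} for 1 ≤ i < N; and the Knop–Cherednik operators f·Ξ_i = t^{1−i} ((f·T_{i−1}⋯T_1 τ)·(1 − x_N^{−1}))·T_{N−1}^{−1}⋯T_i^{−1} + f·x_i^{−1}. Then Ξ_i = ξ_i + D_i as operators on F, for every 1 ≤ i ≤ N. -/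

import Mathlib

open Finset MvPolynomial

set_option synthInstance.maxHeartbeats 1000000
set_option maxHeartbeats 1000000

noncomputable section

/-- `ℚ[q,t]`. -/
abbrev Qqt : Type := MvPolynomial (Fin 2) ℚ
/-- The field `ℚ(q,t)`. -/
abbrev Kqt : Type := FractionRing Qqt

/-- The parameter `q ∈ ℚ(q,t)`. -/
def qk : Kqt := algebraMap Qqt Kqt (X 0)
/-- The parameter `t ∈ ℚ(q,t)`. -/
def tk : Kqt := algebraMap Qqt Kqt (X 1)

/-- `ℚ(q,t)[x₁,…,x_N]`. -/
abbrev PolyN (N : ℕ) : Type := MvPolynomial (Fin N) Kqt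
/-- The field `F = ℚ(q,t)(x₁,…,x_N)`. -/
abbrev FN (N : ℕ) : Type := FractionRing (PolyN N)

/-- The variable `x_{i+1}` (0-based `i`) as an element of `F`. -/
def XF {N : ℕ} (i : Fin N) : FN N := algebraMap (PolyN N) (FN N) (X i)
/-- `q` as an element of `F`. -/
def qF (N : ℕ) : FN N := algebraMap (PolyN N) (FN N) (C qk)
/-- `t` as an element of `F`. -/
def tF (N : ℕ) : FN N := algebraMap (PolyN N) (FN N) (C tk)

/-- Clamped element of `Fin N`. -/
def finCl (N : ℕ) (hN : 0 < N) (i : ℕ) : Fin N := ⟨min i (N - 1), by omega⟩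

/-- The automorphism of `F` exchanging the variables `x_i` and `x_j`. -/
def swapF (N : ℕ) (a b : Fin N) : FN N ≃+* FN N :=
  IsFractionRing.ringEquivOfRingEquiv (K := FN N) (L := FN N)
    (MvPolynomial.renameEquiv Kqt (Equiv.swap a b)).toRingEquiv

/-- The Demazure–Lusztig operator `T_i` (`1 ≤ i < N`), acting on `F` on the right:
`f·T_i = t f + ((t x_{i+1} − x_i)/(x_{i+1} − x_i)) (f∘s_i − f)`. -/
def Tdl (N : ℕ) (hN : 0 < N) (i : ℕ) (f : FN N) : FN N :=
  tF N * f +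
    ((tF N * XF (finCl N hN i) - XF (finCl N hN (i - 1))) /
      (XF (finCl N hN i) - XF (finCl N hN (i - 1)))) *
    (swapF N (finCl N hN (i - 1)) (finCl N hN i) f - f)

/-- `T_i^{−1} = t^{−1}(T_i + 1 − t)`. -/
def TopInv (N : ℕ) (hN : 0 < N) (i : ℕ) (f : FN N) : FN N :=
  (tF N)⁻¹ * (Tdl N hN i f + f - tF N * f)

/-- The algebra endomorphism `τ` of `ℚ(q,t)[x₁,…,x_N]`:
`f ↦ f(x_N/q, x₁, …, x_{N−1})`. -/
def tauPoly (N : ℕ) (hN : 0 < N) : PolyN N →ₐ[Kqt] PolyN N :=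
  aeval (fun i : Fin N =>
    if (i : ℕ) = 0 then C qk⁻¹ * X (finCl N hN (N - 1)) else X (finCl N hN ((i : ℕ) - 1)))

/-- The inverse of `τ`: `f ↦ f(x₂, …, x_N, q x₁)`. -/
def tauPolyInv (N : ℕ) (hN : 0 < N) : PolyN N →ₐ[Kqt] PolyN N :=
  aeval (fun i : Fin N =>
    if (i : ℕ) = N - 1 then C qk * X (finCl N hN 0) else X (finCl N hN ((i : ℕ) + 1)))


lemma qk_ne_zero : qk ≠ 0 := by
  simp only [qk, ne_eq, map_eq_zero_iff _ (IsFractionRing.injective Qqt Kqt)]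
  exact MvPolynomial.X_ne_zero 0

/-- `τ` as an automorphism of `ℚ(q,t)[x₁,…,x_N]`. -/
def tauEquiv (N : ℕ) (hN : 0 < N) : PolyN N ≃ₐ[Kqt] PolyN N :=
  AlgEquiv.ofAlgHom (tauPoly N hN) (tauPolyInv N hN)
    (by
      apply MvPolynomial.algHom_ext
      intro i
      simp only [AlgHom.comp_apply, AlgHom.id_apply, tauPoly, tauPolyInv, aeval_X]
      by_cases h : (i : ℕ) = N - 1
      · rw [if_pos h, map_mul, aeval_C, aeval_X, MvPolynomial.algebraMap_eq]
        have h0 : ((finCl N hN 0 : Fin N) : ℕ) = 0 := by simp [finCl]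
        rw [if_pos h0, ← mul_assoc, ← C_mul, mul_inv_cancel₀ qk_ne_zero, C_1, one_mul]
        congr 1
        apply Fin.ext
        simp only [finCl]
        omega
      · rw [if_neg h, aeval_X]
        have hlt : (i : ℕ) < N - 1 := by have := i.isLt; omega
        have h1 : ((finCl N hN ((i : ℕ) + 1) : Fin N) : ℕ) = (i : ℕ) + 1 := by
          simp [finCl]; omega
        rw [if_neg (by omega : ¬ ((finCl N hN ((i : ℕ) + 1) : Fin N) : ℕ) = 0)]
        congr 1
        apply Fin.ext
        simp only [finCl, h1]
        omega)
    (by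
      apply MvPolynomial.algHom_ext
      intro i
      simp only [AlgHom.comp_apply, AlgHom.id_apply, tauPoly, tauPolyInv, aeval_X]
      by_cases h : (i : ℕ) = 0
      · rw [if_pos h, map_mul, aeval_C, aeval_X, MvPolynomial.algebraMap_eq]
        have hh : ((finCl N hN (N - 1) : Fin N) : ℕ) = N - 1 := by simp [finCl]
        rw [if_pos hh, ← mul_assoc, ← C_mul, inv_mul_cancel₀ qk_ne_zero, C_1, one_mul]
        congr 1
        apply Fin.ext
        simp only [finCl]
        omega
      · rw [if_neg h, aeval_X]
        have hi := i.isLt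
        have hne : ¬ ((finCl N hN ((i : ℕ) - 1) : Fin N) : ℕ) = N - 1 := by
          simp only [finCl]; omega
        rw [if_neg hne]
        congr 1
        apply Fin.ext
        simp only [finCl]
        omega)

/-- `τ` as an automorphism of `F`. -/
def tauF (N : ℕ) (hN : 0 < N) : FN N ≃+* FN N :=
  IsFractionRing.ringEquivOfRingEquiv (K := FN N) (L := FN N) (tauEquiv N hN).toRingEquiv

/-- Apply the operators `A_{j}` for `j` running through the list `l`, left to right. -/
def chainOp {N : ℕ} (A : ℕ → FN N → FN N) (l : List ℕ) (f : FN N) : FN N :=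
  l.foldl (fun g j => A j g) f

/-- The Cherednik operator `ξ_i = t^{1−i} T_{i−1}⋯T_1 τ T_{N−1}^{−1}⋯T_i^{−1}`
(acting on the right, composing left-to-right). -/
def xiOp (N : ℕ) (hN : 0 < N) (i : ℕ) (f : FN N) : FN N :=
  ((tF N)⁻¹) ^ (i - 1) *
    chainOp (TopInv N hN) ((List.range' i (N - i)).reverse)
      (tauF N hN (chainOp (Tdl N hN) ((List.range' 1 (i - 1)).reverse) f))

/-- The `(q,t)`-Dunkl operators: `f·D_N = (f − f·ξ_N) x_N^{−1}` and
`D_i = t T_i^{−1} D_{i+1} T_i^{−1}`. -/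
def Dop (N : ℕ) (hN : 0 < N) : ℕ → FN N → FN N := fun i f =>
  if _h : i < N then
    tF N * TopInv N hN i (Dop N hN (i + 1) (TopInv N hN i f))
  else
    (f - xiOp N hN N f) * (XF (finCl N hN (N - 1)))⁻¹
termination_by i => N - i

/-- The Knop–Cherednik operator
`f·Ξ_i = t^{1−i} ((f·T_{i−1}⋯T_1 τ)·(1 − x_N^{−1}))·T_{N−1}^{−1}⋯T_i^{−1} + f·x_i^{−1}`. -/
def XiOp (N : ℕ) (hN : 0 < N) (i : ℕ) (f : FN N) : FN N :=
  ((tF N)⁻¹) ^ (i - 1) *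
    chainOp (TopInv N hN) ((List.range' i (N - i)).reverse)
      (tauF N hN (chainOp (Tdl N hN) ((List.range' 1 (i - 1)).reverse) f) *
        (1 - (XF (finCl N hN (N - 1)))⁻¹)) +
  f * (XF (finCl N hN (i - 1)))⁻¹

/-! The identity reduces to a closed form for the Dunkl operators,
`f·D_i = f·x_i⁻¹ − t^{1−i} ((f·T_{i−1}⋯T_1 τ)·x_N⁻¹)·T_{N−1}⁻¹⋯T_i⁻¹`,
which for `i = N` is the definition of `D_N` and descends from `i + 1` to `i` by two
identities for the single generator `T_i`, `T_i T_i⁻¹ = 1` and `t (T_i⁻¹ f · x_{i+1}⁻¹)·T_i⁻¹ = f·x_i⁻¹`.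
Both are identities in a field with an involution exchanging `x_i` and `x_{i+1}`. -/

section DemazureLusztig

variable {K : Type*} [Field K] (σ : K ≃+* K) (t a b : K)

def demazureLusztig (f : K) : K := t * f + (t * b - a) / (b - a) * (σ f - f)

def demazureLusztigInv (f : K) : K := t⁻¹ * (demazureLusztig σ t a b f + f - t * f)

variable {σ t a b}

lemma demazureLusztig_sub (f g : K) :
    demazureLusztig σ t a b (f - g) = demazureLusztig σ t a b f - demazureLusztig σ t a b g := by
  simp only [demazureLusztig, map_sub]
  ring

lemma demazureLusztigInv_sub (f g : K) :
    demazureLusztigInv σ t a b (f - g) =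
      demazureLusztigInv σ t a b f - demazureLusztigInv σ t a b g := by
  simp only [demazureLusztigInv, demazureLusztig_sub]
  ring

lemma demazureLusztig_mul_of_fixed {c : K} (hc : σ c = c) (f : K) :
    demazureLusztig σ t a b (c * f) = c * demazureLusztig σ t a b f := by
  simp only [demazureLusztig, map_mul, hc]
  ring

lemma demazureLusztigInv_mul_of_fixed {c : K} (hc : σ c = c) (f : K) :
    demazureLusztigInv σ t a b (c * f) = c * demazureLusztigInv σ t a b f := by
  simp only [demazureLusztigInv, demazureLusztig_mul_of_fixed hc]
  ring

lemma demazureLusztig_demazureLusztigInv (hσ : Function.Involutive σ) (hσt : σ t = t)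
    (hσa : σ a = b) (hσb : σ b = a) (hab : a ≠ b) (ht : t ≠ 0) (f : K) :
    demazureLusztig σ t a b (demazureLusztigInv σ t a b f) = f := by
  have hba : b - a ≠ 0 := sub_ne_zero.mpr hab.symm
  have hab' : a - b ≠ 0 := sub_ne_zero.mpr hab
  simp only [demazureLusztig, demazureLusztigInv, map_add, map_sub, map_mul, map_div₀, map_inv₀,
    hσ _, hσt, hσa, hσb]
  field_simp
  ring

lemma mul_demazureLusztigInv_demazureLusztigInv_mul_inv (hσ : Function.Involutive σ)
    (hσt : σ t = t) (hσa : σ a = b) (hσb : σ b = a) (hab : a ≠ b) (ht : t ≠ 0) (ha : a ≠ 0)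
    (hb : b ≠ 0) (f : K) :
    t * demazureLusztigInv σ t a b (demazureLusztigInv σ t a b f * b⁻¹) = f * a⁻¹ := by
  have hba : b - a ≠ 0 := sub_ne_zero.mpr hab.symm
  have hab' : a - b ≠ 0 := sub_ne_zero.mpr hab
  simp only [demazureLusztig, demazureLusztigInv, map_add, map_sub, map_mul, map_div₀, map_inv₀,
    hσ _, hσt, hσa, hσb]
  field_simp
  ring

end DemazureLusztig

lemma tF_ne_zero (N : ℕ) : tF N ≠ 0 := by
  have htk : tk ≠ 0 :=
    (map_ne_zero_iff _ (IsFractionRing.injective Qqt Kqt)).mpr (X_ne_zero 1)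
  exact (map_ne_zero_iff _ (IsFractionRing.injective (PolyN N) (FN N))).mpr (C_ne_zero.mpr htk)

lemma XF_injective {N : ℕ} : Function.Injective (XF (N := N)) :=
  (IsFractionRing.injective (PolyN N) (FN N)).comp X_injective

lemma XF_ne_zero {N : ℕ} (i : Fin N) : XF i ≠ 0 :=
  (map_ne_zero_iff _ (IsFractionRing.injective (PolyN N) (FN N))).mpr (X_ne_zero i)

section swapF

variable {N : ℕ} (a b : Fin N)

lemma swapF_algebraMap (p : PolyN N) :
    swapF N a b (algebraMap (PolyN N) (FN N) p) =
      algebraMap (PolyN N) (FN N) (rename (Equiv.swap a b) p) :=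
  IsFractionRing.ringEquivOfRingEquiv_algebraMap _ p

lemma swapF_XF (c : Fin N) : swapF N a b (XF c) = XF (Equiv.swap a b c) := by
  rw [XF, swapF_algebraMap, rename_X, XF]

lemma swapF_tF : swapF N a b (tF N) = tF N := by
  rw [tF, swapF_algebraMap, rename_C]

lemma swapF_involutive : Function.Involutive (swapF N a b) := by
  have hsymm : (swapF N a b).symm = swapF N a b := by
    rw [swapF, IsFractionRing.ringEquivOfRingEquiv_symm]
    congr 1
  intro f
  conv_lhs => arg 1; rw [← hsymm]
  exact (swapF N a b).apply_symm_apply f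

end swapF

/- `Tdl N hN i` and `TopInv N hN i` are, by definition, `demazureLusztig` and
`demazureLusztigInv` for the swap of `x_i` and `x_{i+1}`. -/
section Hecke

variable {N : ℕ} (hN : 0 < N) {i : ℕ}

lemma finCl_pred_ne (hi1 : 1 ≤ i) (hiN : i < N) : finCl N hN (i - 1) ≠ finCl N hN i := by
  simp only [finCl, ne_eq, Fin.mk.injEq]
  omega

lemma Tdl_TopInv (hi1 : 1 ≤ i) (hiN : i < N) (f : FN N) : Tdl N hN i (TopInv N hN i f) = f :=
  demazureLusztig_demazureLusztigInv (swapF_involutive _ _) (swapF_tF _ _)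
    (by rw [swapF_XF, Equiv.swap_apply_left]) (by rw [swapF_XF, Equiv.swap_apply_right])
    (XF_injective.ne (finCl_pred_ne hN hi1 hiN)) (tF_ne_zero N) f

lemma mul_TopInv_TopInv_mul_inv (hi1 : 1 ≤ i) (hiN : i < N) (f : FN N) :
    tF N * TopInv N hN i (TopInv N hN i f * (XF (finCl N hN i))⁻¹) =
      f * (XF (finCl N hN (i - 1)))⁻¹ :=
  mul_demazureLusztigInv_demazureLusztigInv_mul_inv (swapF_involutive _ _) (swapF_tF _ _)
    (by rw [swapF_XF, Equiv.swap_apply_left]) (by rw [swapF_XF, Equiv.swap_apply_right])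
    (XF_injective.ne (finCl_pred_ne hN hi1 hiN)) (tF_ne_zero N) (XF_ne_zero _) (XF_ne_zero _) f

lemma TopInv_sub (i : ℕ) (f g : FN N) :
    TopInv N hN i (f - g) = TopInv N hN i f - TopInv N hN i g :=
  demazureLusztigInv_sub f g

lemma TopInv_tF_inv_pow_mul (i k : ℕ) (f : FN N) :
    TopInv N hN i ((tF N)⁻¹ ^ k * f) = (tF N)⁻¹ ^ k * TopInv N hN i f :=
  demazureLusztigInv_mul_of_fixed (by rw [map_pow, map_inv₀, swapF_tF]) f

end Hecke

section chainOp

variable {N : ℕ} {A : ℕ → FN N → FN N}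

lemma chainOp_append (l₁ l₂ : List ℕ) (f : FN N) :
    chainOp A (l₁ ++ l₂) f = chainOp A l₂ (chainOp A l₁ f) :=
  List.foldl_append

lemma chainOp_sub (hA : ∀ j f g, A j (f - g) = A j f - A j g) (l : List ℕ) (f g : FN N) :
    chainOp A l (f - g) = chainOp A l f - chainOp A l g := by
  induction l generalizing f g with
  | nil => rfl
  | cons j l ih => exact (congrArg _ (hA j f g)).trans (ih _ _)

end chainOp

section Products

variable (N : ℕ) (hN : 0 < N)

/-- `f ↦ f·T_{i−1}⋯T_1`. -/
def lowerTProd (i : ℕ) (f : FN N) : FN N :=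
  chainOp (Tdl N hN) ((List.range' 1 (i - 1)).reverse) f

/-- `f ↦ f·T_{N−1}⁻¹⋯T_i⁻¹`. -/
def upperTInvProd (i : ℕ) (f : FN N) : FN N :=
  chainOp (TopInv N hN) ((List.range' i (N - i)).reverse) f

variable {N} {i : ℕ}

lemma lowerTProd_succ (hi1 : 1 ≤ i) (f : FN N) :
    lowerTProd N hN (i + 1) f = lowerTProd N hN i (Tdl N hN i f) := by
  obtain ⟨k, rfl⟩ := Nat.exists_eq_add_of_le' hi1
  rw [lowerTProd, Nat.add_sub_cancel, List.range'_1_concat, List.reverse_append,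
    List.reverse_singleton, Nat.add_comm 1 k]
  rfl

lemma upperTInvProd_self (f : FN N) : upperTInvProd N hN N f = f := by
  rw [upperTInvProd, Nat.sub_self, List.range'_zero, List.reverse_nil]
  rfl

lemma upperTInvProd_of_lt (hiN : i < N) (f : FN N) :
    upperTInvProd N hN i f = TopInv N hN i (upperTInvProd N hN (i + 1) f) := by
  rw [upperTInvProd, show N - i = N - (i + 1) + 1 by omega, List.range'_succ, List.reverse_cons,
    chainOp_append]
  rfl

end Products

theorem Dop_eq (N : ℕ) (hN : 0 < N) (i : ℕ) (hi1 : 1 ≤ i) (hiN : i ≤ N) (f : FN N) :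
    Dop N hN i f = f * (XF (finCl N hN (i - 1)))⁻¹ -
      (tF N)⁻¹ ^ (i - 1) *
        upperTInvProd N hN i (tauF N hN (lowerTProd N hN i f) * (XF (finCl N hN (N - 1)))⁻¹) := by
  induction hiN using Nat.decreasingInduction generalizing f with
  | self =>
    rw [Dop, dif_neg (lt_irrefl N), sub_mul, upperTInvProd_self, xiOp, Nat.sub_self,
      List.range'_zero, List.reverse_nil, mul_assoc]
    rfl
  | of_succ i hiN ih =>
    rw [Dop, dif_pos hiN, ih (by omega), lowerTProd_succ hN hi1, Tdl_TopInv hN hi1 hiN,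
      Nat.add_sub_cancel, TopInv_sub, mul_sub, mul_TopInv_TopInv_mul_inv hN hi1 hiN,
      TopInv_tF_inv_pow_mul, ← upperTInvProd_of_lt hN hiN, ← mul_assoc]
    congr 2
    obtain ⟨k, rfl⟩ := Nat.exists_eq_add_of_le' hi1
    rw [Nat.add_sub_cancel, pow_succ', ← mul_assoc, mul_inv_cancel₀ (tF_ne_zero N), one_mul]

/-- On the field `F = ℚ(q,t)(x₁,…,x_N)` the Knop–Cherednik operators
decompose as `Ξ_i = ξ_i + D_i` for every `1 ≤ i ≤ N`. -/
theorem knop_cherednik_eq_cherednik_add_dunkl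
    (N : ℕ) (hN : 2 ≤ N) (i : ℕ) (hi1 : 1 ≤ i) (hiN : i ≤ N) (f : FN N) :
    XiOp N (by omega) i f = xiOp N (by omega) i f + Dop N (by omega) i f := by
  rw [XiOp, xiOp, Dop_eq N _ i hi1 hiN f, upperTInvProd, lowerTProd, mul_one_sub,
    chainOp_sub (TopInv_sub _)]
  ring

end
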